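/- Let A and C be unital C*-algebras, let ι₁, ι₂ : A → C be unital *-homomorphisms whose ranges commute elementwise (ι₁(a) ι₂(b) = ι₂(b) ι₁(a) for all a, b ∈ A), and let Λ : C → A be a unital completely positive map with Λ ∘ ι₁ = id_A and Λ ∘ ι₂ = id_A. Then A is commutative, and moreover Λ(ι₁(a) ι₂(b)) = a b for all a, b ∈ A. -/

import Mathlib

/-!
Write `D(x, y) = Λ(x* y) - Λ(x*) Λ(y)`. Complete positivity of the unital map `Λ`, tested on the
triple `(1, c, d)`, says that the Hermitian form `D` is positive semidefinite, so the
Cauchy–Schwarz argument gives `D(c, d) = 0` for every `d` as soon as `D(c, c) = 0`. For a unital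
*-homomorphism `ι` with `Λ ∘ ι = id` this holds for `c = ι(a*)`, hence `Λ(ι(a) d) = a Λ(d)`.
Applied to both `ι₁` and `ι₂`, this gives `Λ(ι₁(a) ι₂(b)) = a b` and `Λ(ι₂(b) ι₁(a)) = b a`,
and these agree because the ranges commute.
-/

open Filter Topology ComplexConjugate

/-- A linear map between C*-algebras is completely positive if for every `n` and all tuples
`a : Fin n → A`, `b : Fin n → B`, the element `∑ i, ∑ j, (b i)* Λ((a i)* a j) (b j)` is
positive. -/
def IsCompletelyPositive {A B : Type*} [CStarAlgebra A] [CStarAlgebra B]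
    [PartialOrder B] [StarOrderedRing B] (Λ : A →ₗ[ℂ] B) : Prop :=
  ∀ (n : ℕ) (a : Fin n → A) (b : Fin n → B),
    0 ≤ ∑ i : Fin n, ∑ j : Fin n, star (b i) * Λ (star (a i) * a j) * b j

section PositiveCone

variable {A : Type*} [NonUnitalCStarAlgebra A] [PartialOrder A] [StarOrderedRing A]

theorem nonneg_of_forall_nonneg_smul_add {Z E : A} (h : ∀ r : ℝ, 0 ≤ r • Z + E) : 0 ≤ Z := by
  have hlim : Tendsto (fun n : ℕ => (n : ℝ)⁻¹ • ((n : ℝ) • Z + E)) atTop (𝓝 Z) := by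
    have : Tendsto (fun n : ℕ => Z + (n : ℝ)⁻¹ • E) atTop (𝓝 (Z + (0 : ℝ) • E)) :=
      tendsto_const_nhds.add <|
        (tendsto_inv_atTop_zero.comp tendsto_natCast_atTop_atTop).smul_const E
    rw [zero_smul, add_zero] at this
    refine this.congr' (eventually_atTop.2 ⟨1, fun n hn => ?_⟩)
    have hn0 : (n : ℝ) ≠ 0 := by positivity
    simp [smul_add, smul_smul, inv_mul_cancel₀ hn0]
  exact ge_of_tendsto' hlim fun n => smul_nonneg (by positivity) (h n)

theorem eq_zero_of_forall_nonneg_smul_add {Z E : A} (h : ∀ r : ℝ, 0 ≤ r • Z + E) : Z = 0 :=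
  le_antisymm
    (neg_nonneg.1 <| nonneg_of_forall_nonneg_smul_add fun r => by simpa using h (-r))
    (nonneg_of_forall_nonneg_smul_add h)

theorem eq_zero_of_forall_nonneg_conj_smul_add {X Y E : A}
    (h : ∀ t : ℂ, 0 ≤ conj t • X + t • Y + E) : X = 0 := by
  have hsum : X + Y = 0 := eq_zero_of_forall_nonneg_smul_add (E := E) fun r => by
    simpa [Complex.coe_smul, smul_add] using h r
  have hdiff : Complex.I • (Y - X) = 0 := eq_zero_of_forall_nonneg_smul_add (E := E) fun r => by
    convert h (r * Complex.I) using 2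
    simp only [map_mul, Complex.conj_ofReal, Complex.conj_I, smul_sub, ← Complex.coe_smul,
      smul_smul]
    module
  have hYX : Y = X := sub_eq_zero.1 ((smul_eq_zero.1 hdiff).resolve_left Complex.I_ne_zero)
  rw [hYX, ← two_smul ℂ] at hsum
  exact (smul_eq_zero.1 hsum).resolve_left two_ne_zero

end PositiveCone

def schwarzDefect {A C : Type*} [Ring A] [Module ℂ A] [NonUnitalNonAssocSemiring C] [Star C]
    [Module ℂ C] (Λ : C →ₗ[ℂ] A) (x y : C) : A :=
  Λ (star x * y) - Λ (star x) * Λ y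

namespace IsCompletelyPositive

variable {A C : Type*} [CStarAlgebra A] [CStarAlgebra C] [PartialOrder A] [StarOrderedRing A]
  {Λ : C →ₗ[ℂ] A}

theorem schwarzDefect_form_nonneg (hcp : IsCompletelyPositive Λ) (hunital : Λ 1 = 1)
    (c d : C) (t s : ℂ) :
    0 ≤ (conj t * t) • schwarzDefect Λ c c + (conj t * s) • schwarzDefect Λ c d
      + (conj s * t) • schwarzDefect Λ d c + (conj s * s) • schwarzDefect Λ d d := by
  -- `b 0` makes the cross terms the products `Λ (star x) * Λ y` subtracted in `schwarzDefect`.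
  have h := hcp 3 ![1, c, d] ![-(t • Λ c + s • Λ d), t • (1 : A), s • (1 : A)]
  simp only [Fin.sum_univ_three, Matrix.cons_val_zero, Matrix.cons_val_one, Matrix.head_cons,
    Matrix.cons_val_two, Matrix.tail_cons, star_one, one_mul, mul_one, star_neg, star_add,
    star_smul, hunital] at h
  refine h.trans_eq ?_
  simp only [schwarzDefect, mul_add, add_mul, mul_neg, neg_mul, smul_mul_assoc, mul_smul_comm,
    smul_smul, smul_sub, one_mul, mul_one, neg_add, starRingEnd_apply]
  module

theorem schwarzDefect_eq_zero_of_self_eq_zero (hcp : IsCompletelyPositive Λ) (hunital : Λ 1 = 1)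
    {c : C} (hc : schwarzDefect Λ c c = 0) (d : C) : schwarzDefect Λ c d = 0 :=
  eq_zero_of_forall_nonneg_conj_smul_add (Y := schwarzDefect Λ d c) fun t => by
    simpa [hc] using hcp.schwarzDefect_form_nonneg hunital c d t 1

theorem map_mul_left_of_leftInverse (hcp : IsCompletelyPositive Λ) (hunital : Λ 1 = 1)
    (ι : A →⋆ₐ[ℂ] C) (hι : ∀ a, Λ (ι a) = a) (a : A) (d : C) : Λ (ι a * d) = a * Λ d := by
  have hstar : star (ι (star a)) = ι a := by rw [← map_star, star_star]
  have hself : schwarzDefect Λ (ι (star a)) (ι (star a)) = 0 := by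
    rw [schwarzDefect, hstar, ← map_mul, hι, hι, hι, sub_self]
  have h := hcp.schwarzDefect_eq_zero_of_self_eq_zero hunital hself d
  rwa [schwarzDefect, hstar, hι, sub_eq_zero] at h

end IsCompletelyPositive

theorem broadcasting_implies_commutative_general {A C : Type*} [CStarAlgebra A] [CStarAlgebra C]
    [PartialOrder A] [StarOrderedRing A]
    (ι₁ ι₂ : A →⋆ₐ[ℂ] C)
    (hcomm : ∀ a b : A, ι₁ a * ι₂ b = ι₂ b * ι₁ a)
    (Λ : C →ₗ[ℂ] A) (hunital : Λ 1 = 1) (hcp : IsCompletelyPositive Λ)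
    (h₁ : ∀ a : A, Λ (ι₁ a) = a) (h₂ : ∀ a : A, Λ (ι₂ a) = a) :
    (∀ a b : A, a * b = b * a) ∧ (∀ a b : A, Λ (ι₁ a * ι₂ b) = a * b) := by
  have hmul : ∀ a b : A, Λ (ι₁ a * ι₂ b) = a * b := fun a b => by
    rw [hcp.map_mul_left_of_leftInverse hunital ι₁ h₁, h₂]
  refine ⟨fun a b => ?_, hmul⟩
  rw [← hmul, hcomm, hcp.map_mul_left_of_leftInverse hunital ι₂ h₂, h₁]

/-- No-copying implies commutativity: if `ι₁, ι₂ : A → C` are unital *-homomorphisms with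
elementwise commuting ranges and `Λ : C → A` is a unital completely positive map with
`Λ ∘ ι₁ = id` and `Λ ∘ ι₂ = id`, then `A` is commutative and `Λ(ι₁(a) ι₂(b)) = a b`. -/
theorem broadcasting_implies_commutative {A C : Type*} [CStarAlgebra A] [CStarAlgebra C]
    [PartialOrder A] [StarOrderedRing A] [PartialOrder C] [StarOrderedRing C]
    (ι₁ ι₂ : A →⋆ₐ[ℂ] C)
    (hcomm : ∀ a b : A, ι₁ a * ι₂ b = ι₂ b * ι₁ a)
    (Λ : C →ₗ[ℂ] A) (hunital : Λ 1 = 1) (hcp : IsCompletelyPositive Λ)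
    (h₁ : ∀ a : A, Λ (ι₁ a) = a) (h₂ : ∀ a : A, Λ (ι₂ a) = a) :
    (∀ a b : A, a * b = b * a) ∧ (∀ a b : A, Λ (ι₁ a * ι₂ b) = a * b) :=
  broadcasting_implies_commutative_general ι₁ ι₂ hcomm Λ hunital hcp h₁ h₂
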